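/- The relaxed district-based majority function 𝒲_δδ is (1/δ²)-stable compared with the district-based majority function 𝒲: for every district-based election, every δ ∈ (0,1), every voting profile c, every α ∈ (0,1], and every α-noisy probability distribution y around c, it holds E_{ỹ∼y}[𝒲_δδ(ỹ)] ≥ 𝒲(c) · (1 − α/δ²). -/
import Mathlib


open Finset

/-- Number of voters of district `d` voting for candidate `c0` (encoded as `true`). -/
def districtVotes {R D : Type*} [Fintype R] [DecidableEq D] (dist : R → D)
    (c : R → Bool) (d : D) : ℕ :=
  (univ.filter (fun r => dist r = d ∧ c r = true)).card

/-- The within-district majority threshold `K_d = ⌈|R^d|/2⌉`. -/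
noncomputable def Kd {R D : Type*} [Fintype R] [DecidableEq D] (dist : R → D) (d : D) : ℕ :=
  ⌈((univ.filter (fun r => dist r = d)).card : ℝ) / 2⌉₊

/-- The district-level majority threshold `K_D = ⌈|D|/2⌉`. -/
noncomputable def KD (D : Type*) [Fintype D] : ℕ :=
  ⌈(Fintype.card D : ℝ) / 2⌉₊

/-- The district-based majority function `𝒲`: value `1` iff at least `K_D` districts `d`
have at least `K_d` voters voting `c0`. -/
noncomputable def Wdistrict {R D : Type*} [Fintype R] [Fintype D] [DecidableEq D]
    (dist : R → D) (c : R → Bool) : ℝ :=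
  if KD D ≤ (univ.filter (fun d => Kd dist d ≤ districtVotes dist c d)).card then 1 else 0

/-- The doubly-relaxed district-based majority function `𝒲_δδ`: value `1` iff at least
`⌈(1-δ)·K_D⌉` districts `d` have at least `⌈(1-δ)·K_d⌉` voters voting `c0`. -/
noncomputable def Wdd {R D : Type*} [Fintype R] [Fintype D] [DecidableEq D]
    (dist : R → D) (δ : ℝ) (c : R → Bool) : ℝ :=
  if ⌈(1 - δ) * (KD D : ℝ)⌉₊ ≤
      (univ.filter (fun d => ⌈(1 - δ) * (Kd dist d : ℝ)⌉₊ ≤ districtVotes dist c d)).card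
    then 1 else 0

set_option maxHeartbeats 2000000 in
/-- The relaxed district-based majority function `𝒲_δδ` is `(1/δ²)`-stable compared with
the district-based majority function `𝒲`: for every profile `c` and `α`-noisy
distribution `y` around `c`, `E_{ỹ∼y}[𝒲_δδ(ỹ)] ≥ 𝒲(c)·(1 − α/δ²)`. -/
theorem Wdd_stable_compared_Wdistrict {R D : Type*} [Fintype R] [DecidableEq R]
    [Fintype D] [DecidableEq D] (dist : R → D)
    (δ α : ℝ) (hδ : δ ∈ Set.Ioo (0 : ℝ) 1) (hα : α ∈ Set.Ioc (0 : ℝ) 1)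
    (c : R → Bool) (y : (R → Bool) → ℝ)
    (hy0 : ∀ c', 0 ≤ y c') (hy1 : ∑ c', y c' = 1)
    (hnoisy : ∀ r : R, ∑ c' ∈ univ.filter (fun c' : R → Bool => c' r ≠ c r), y c' ≤ α) :
    Wdistrict dist c * (1 - α / δ ^ 2) ≤ ∑ c', y c' * Wdd dist δ c' := by
  obtain ⟨hδ0, hδ1⟩ := hδ
  obtain ⟨hα0, hα1⟩ := hα
  have hδ2 : (0:ℝ) < δ ^ 2 := by positivity
  have hWdd01 : ∀ c', (0:ℝ) ≤ Wdd dist δ c' := by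
    intro c'; unfold Wdd; split_ifs <;> norm_num
  unfold Wdistrict
  split_ifs with hW
  swap
  · rw [zero_mul]
    exact Finset.sum_nonneg fun c' _ => mul_nonneg (hy0 c') (hWdd01 c')
  rw [one_mul]
  by_cases hKD : KD D = 0
  · have hall : ∀ c', Wdd dist δ c' = 1 := by
      intro c'; unfold Wdd
      rw [if_pos]
      rw [hKD]
      simp
    have h1 : (0:ℝ) ≤ α / δ ^ 2 := by positivity
    calc 1 - α / δ ^ 2 ≤ 1 := by linarith
      _ = ∑ c', y c' * Wdd dist δ c' := by
          rw [← hy1]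
          exact Finset.sum_congr rfl fun c' _ => by rw [hall, mul_one]
  have hKD1 : 1 ≤ KD D := Nat.one_le_iff_ne_zero.mpr hKD
  have hKD1' : (1:ℝ) ≤ (KD D : ℝ) := by exact_mod_cast hKD1
  set P : Finset D := univ.filter (fun d => Kd dist d ≤ districtVotes dist c d) with hP
  set T : ℝ := (P.card : ℝ) - (1 - δ) * (KD D : ℝ) with hT
  have hPK : (KD D : ℝ) ≤ (P.card : ℝ) := Nat.cast_le.mpr hW
  have hTpos : 0 < T := by rw [hT]; nlinarith
  have hmain : ((P.card : ℝ) * (α / δ)) / T ≤ α / δ ^ 2 := by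
    rw [div_le_div_iff₀ hTpos hδ2]
    have hcancel : α / δ * δ ^ 2 = α * δ := by
      rw [pow_two, ← mul_assoc, div_mul_cancel₀ α hδ0.ne']
    rw [mul_assoc, hcancel, hT]
    have h3 : α * (1 - δ) * (KD D : ℝ) ≤ α * (1 - δ) * (P.card : ℝ) :=
      mul_le_mul_of_nonneg_left hPK (mul_nonneg hα0.le (sub_nonneg.mpr hδ1.le))
    linarith
  have hVK : ∀ d ∈ P, Kd dist d ≤ districtVotes dist c d := by
    intro d hd
    exact (Finset.mem_filter.mp hd).2
  set den : D → ℝ := fun d => (districtVotes dist c d : ℝ) - (1 - δ) * (Kd dist d : ℝ)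
    with hden
  have hden_nonneg : ∀ d ∈ P, 0 ≤ den d := by
    intro d hd
    have h1 : (Kd dist d : ℝ) ≤ (districtVotes dist c d : ℝ) := Nat.cast_le.mpr (hVK d hd)
    have h2 : (0:ℝ) ≤ (Kd dist d : ℝ) := Nat.cast_nonneg _
    simp only [hden]
    nlinarith
  set Td : D → Finset R := fun d => univ.filter (fun r => dist r = d ∧ c r = true) with hTd
  have hTdcard : ∀ d, (Td d).card = districtVotes dist c d := fun d => rfl
  set F : (R → Bool) → D → ℕ := fun c' d => ((Td d).filter (fun r => c' r = false)).card
    with hF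
  -- counting: votes can drop by at most the number of true→false flips
  have hFV : ∀ (c' : R → Bool) (d : D),
      districtVotes dist c d ≤ F c' d + districtVotes dist c' d := by
    intro c' d
    have hsub : Td d ⊆ ((Td d).filter (fun r => c' r = false)) ∪
        (univ.filter (fun r => dist r = d ∧ c' r = true)) := by
      intro r hr
      have hr' := Finset.mem_filter.mp hr
      rcases hb : c' r with _ | _
      · exact Finset.mem_union_left _ (Finset.mem_filter.mpr ⟨hr, hb⟩)
      · exact Finset.mem_union_right _
          (Finset.mem_filter.mpr ⟨Finset.mem_univ r, hr'.2.1, hb⟩)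
    calc districtVotes dist c d = (Td d).card := (hTdcard d).symm
      _ ≤ (((Td d).filter (fun r => c' r = false)) ∪
          (univ.filter (fun r => dist r = d ∧ c' r = true))).card :=
        Finset.card_le_card hsub
      _ ≤ F c' d + districtVotes dist c' d := Finset.card_union_le _ _
  set Z : (R → Bool) → ℝ := fun c' => ∑ d ∈ P, (F c' d : ℝ) / den d with hZ
  have hZnn : ∀ c', 0 ≤ Z c' := by
    intro c'
    exact Finset.sum_nonneg fun d hd => div_nonneg (Nat.cast_nonneg _) (hden_nonneg d hd)
  -- per-voter flip probability bound
  have hflip : ∀ r : R, c r = true →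
      ∑ c' : R → Bool, y c' * (if c' r = false then (1:ℝ) else 0) ≤ α := by
    intro r hc
    have heq : ∑ c' : R → Bool, y c' * (if c' r = false then (1:ℝ) else 0)
        = ∑ c' ∈ univ.filter (fun c' : R → Bool => c' r ≠ c r), y c' := by
      rw [Finset.sum_filter]
      apply Finset.sum_congr rfl
      intro c' _
      simp [hc, mul_comm]
    rw [heq]
    exact hnoisy r
  -- expectation bound per district
  have hdistb : ∀ d ∈ P, ∑ c' : R → Bool, y c' * ((F c' d : ℝ) / den d) ≤ α / δ := by
    intro d hd
    have hFcast : ∀ c' : R → Bool, (F c' d : ℝ)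
        = ∑ r ∈ Td d, (if c' r = false then (1:ℝ) else 0) := by
      intro c'
      simp only [hF]
      rw [Finset.card_filter]
      push_cast
      rfl
    have hsumF : ∑ c' : R → Bool, y c' * (F c' d : ℝ)
        ≤ α * (districtVotes dist c d : ℝ) := by
      calc ∑ c' : R → Bool, y c' * (F c' d : ℝ)
          = ∑ c' : R → Bool, ∑ r ∈ Td d, y c' * (if c' r = false then (1:ℝ) else 0) := by
            apply Finset.sum_congr rfl
            intro c' _
            rw [hFcast c', Finset.mul_sum]
        _ = ∑ r ∈ Td d, ∑ c' : R → Bool, y c' * (if c' r = false then (1:ℝ) else 0) :=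
            Finset.sum_comm
        _ ≤ ∑ r ∈ Td d, α := by
            apply Finset.sum_le_sum
            intro r hr
            exact hflip r (Finset.mem_filter.mp hr).2.2
        _ = (districtVotes dist c d : ℝ) * α := by
            rw [Finset.sum_const, hTdcard d, nsmul_eq_mul]
        _ = α * (districtVotes dist c d : ℝ) := mul_comm _ _
    by_cases hV0 : districtVotes dist c d = 0
    · have hF0 : ∀ c' : R → Bool, F c' d = 0 := by
        intro c'
        have h1 : F c' d ≤ (Td d).card := Finset.card_filter_le _ _
        rw [hTdcard d, hV0] at h1
        omega
      have : ∑ c' : R → Bool, y c' * ((F c' d : ℝ) / den d) = 0 := by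
        apply Finset.sum_eq_zero
        intro c' _
        rw [hF0 c']
        simp
      rw [this]
      positivity
    · have hV1 : (1:ℝ) ≤ (districtVotes dist c d : ℝ) := by
        exact_mod_cast Nat.one_le_iff_ne_zero.mpr hV0
      have hKV : (Kd dist d : ℝ) ≤ (districtVotes dist c d : ℝ) :=
        Nat.cast_le.mpr (hVK d hd)
      have hKnn : (0:ℝ) ≤ (Kd dist d : ℝ) := Nat.cast_nonneg _
      have hdenpos : 0 < den d := by
        simp only [hden]
        nlinarith
      have heq : ∑ c' : R → Bool, y c' * ((F c' d : ℝ) / den d)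
          = (∑ c' : R → Bool, y c' * (F c' d : ℝ)) / den d := by
        rw [Finset.sum_div]
        exact Finset.sum_congr rfl fun c' _ => (mul_div_assoc _ _ _).symm
      rw [heq, div_le_div_iff₀ hdenpos hδ0]
      have h2 : (∑ c' : R → Bool, y c' * (F c' d : ℝ)) * δ
          ≤ α * (districtVotes dist c d : ℝ) * δ := by
        apply mul_le_mul_of_nonneg_right hsumF hδ0.le
      simp only [hden]
      nlinarith [mul_nonneg hα0.le (mul_nonneg (sub_nonneg.mpr hδ1.le)
        (sub_nonneg.mpr hKV))]
  -- total expectation bound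
  have hEZ : ∑ c' : R → Bool, y c' * Z c' ≤ (P.card : ℝ) * (α / δ) := by
    calc ∑ c' : R → Bool, y c' * Z c'
        = ∑ c' : R → Bool, ∑ d ∈ P, y c' * ((F c' d : ℝ) / den d) := by
          apply Finset.sum_congr rfl
          intro c' _
          rw [hZ, Finset.mul_sum]
      _ = ∑ d ∈ P, ∑ c' : R → Bool, y c' * ((F c' d : ℝ) / den d) := Finset.sum_comm
      _ ≤ ∑ d ∈ P, α / δ := Finset.sum_le_sum hdistb
      _ = (P.card : ℝ) * (α / δ) := by rw [Finset.sum_const, nsmul_eq_mul]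
  -- pointwise Markov-style bound
  have hpt : ∀ c' : R → Bool, 1 - Z c' / T ≤ Wdd dist δ c' := by
    intro c'
    unfold Wdd
    split_ifs with h
    · have h0 : 0 ≤ Z c' / T := div_nonneg (hZnn c') hTpos.le
      linarith
    · rw [not_le] at h
      have hG : (((univ.filter (fun d =>
          ⌈(1 - δ) * (Kd dist d : ℝ)⌉₊ ≤ districtVotes dist c' d)).card : ℝ))
          < (1 - δ) * (KD D : ℝ) := Nat.lt_ceil.mp h
      set G : Finset D := univ.filter (fun d =>
        ⌈(1 - δ) * (Kd dist d : ℝ)⌉₊ ≤ districtVotes dist c' d) with hGdef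
      set Bad : Finset D := P.filter (fun d =>
        districtVotes dist c' d < ⌈(1 - δ) * (Kd dist d : ℝ)⌉₊) with hBad
      have hsub : P \ Bad ⊆ G := by
        intro d hd
        rw [Finset.mem_sdiff] at hd
        rw [hGdef, Finset.mem_filter]
        refine ⟨Finset.mem_univ d, ?_⟩
        by_contra hcon
        rw [not_le] at hcon
        exact hd.2 (Finset.mem_filter.mpr ⟨hd.1, hcon⟩)
      have hcards : (P \ Bad).card + Bad.card = P.card :=
        Finset.card_sdiff_add_card_eq_card (Finset.filter_subset _ _)
      have hcards2 : P.card ≤ G.card + Bad.card := by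
        have := Finset.card_le_card hsub
        omega
      have hBadT : T < (Bad.card : ℝ) := by
        have h1 : (P.card : ℝ) ≤ (G.card : ℝ) + (Bad.card : ℝ) := by exact_mod_cast hcards2
        rw [hT]
        linarith
      have hterm : ∀ d ∈ Bad, (1:ℝ) ≤ (F c' d : ℝ) / den d := by
        intro d hd
        rw [hBad, Finset.mem_filter] at hd
        obtain ⟨hdP, hdbad⟩ := hd
        have hreal : (districtVotes dist c' d : ℝ) < (1 - δ) * (Kd dist d : ℝ) :=
          Nat.lt_ceil.mp hdbad
        have hv'nn : (0:ℝ) ≤ (districtVotes dist c' d : ℝ) := Nat.cast_nonneg _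
        have hKpos : (0:ℝ) < (Kd dist d : ℝ) := by nlinarith
        have hKV : (Kd dist d : ℝ) ≤ (districtVotes dist c d : ℝ) :=
          Nat.cast_le.mpr (hVK d hdP)
        have hdenpos : 0 < den d := by
          simp only [hden]
          nlinarith
        have hFV' : (districtVotes dist c d : ℝ)
            ≤ (F c' d : ℝ) + (districtVotes dist c' d : ℝ) := by
          exact_mod_cast hFV c' d
        have hFden : den d ≤ (F c' d : ℝ) := by
          simp only [hden]
          linarith
        exact (one_le_div hdenpos).mpr hFden
      have hZB : (Bad.card : ℝ) ≤ Z c' := by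
        calc (Bad.card : ℝ) = ∑ _d ∈ Bad, (1:ℝ) := by
              rw [Finset.sum_const, nsmul_eq_mul, mul_one]
          _ ≤ ∑ d ∈ Bad, (F c' d : ℝ) / den d := Finset.sum_le_sum hterm
          _ ≤ ∑ d ∈ P, (F c' d : ℝ) / den d := by
              apply Finset.sum_le_sum_of_subset_of_nonneg (Finset.filter_subset _ _)
              intro d hd _
              exact div_nonneg (Nat.cast_nonneg _) (hden_nonneg d hd)
          _ = Z c' := rfl
      have hTZ : T ≤ Z c' := le_trans hBadT.le hZB
      have h1 : (1:ℝ) ≤ Z c' / T := (one_le_div hTpos).mpr hTZ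
      linarith
  -- combine
  calc 1 - α / δ ^ 2 ≤ 1 - ((P.card : ℝ) * (α / δ)) / T := by linarith
    _ ≤ 1 - (∑ c' : R → Bool, y c' * Z c') / T := by
        linarith [(div_le_div_iff_of_pos_right hTpos).mpr hEZ]
    _ = ∑ c' : R → Bool, y c' * (1 - Z c' / T) := by
        have hcong : ∀ c' ∈ (univ : Finset (R → Bool)),
            y c' * (1 - Z c' / T) = y c' - y c' * Z c' / T := by
          intro c' _
          ring
        rw [Finset.sum_congr rfl hcong, Finset.sum_sub_distrib, hy1, Finset.sum_div]
    _ ≤ ∑ c' : R → Bool, y c' * Wdd dist δ c' := by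
        apply Finset.sum_le_sum
        intro c' _
        exact mul_le_mul_of_nonneg_left (hpt c') (hy0 c')
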